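/- Let n, k, k', ρ, ε be real numbers with 0 ≤ k < n, 0 ≤ ρ ≤ 1, ε > 0, k' ≥ ρ·k, and n ≥ ((1 + ρ + ε)/ε)·k. Then (n − k')/(n − k) ≤ 1 + ε. -/
import Mathlib

/-- Theorem 3(2): if `k' ≥ ρk` with `0 ≤ ρ ≤ 1` and `n ≥ ((1 + ρ + ε)/ε)k`, then
the dual ratio `(n - k')/(n - k)` is at most `1 + ε`. -/
theorem dual_max_ratio (n k k' ρ ε : ℝ) (hk : 0 ≤ k) (hkn : k < n) (hρ₀ : 0 ≤ ρ)
    (hρ₁ : ρ ≤ 1) (hε : 0 < ε) (hk' : k' ≥ ρ * k) (hn : n ≥ ((1 + ρ + ε) / ε) * k) :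
    (n - k') / (n - k) ≤ 1 + ε := by
  have h2 : (1 + ρ + ε) * k ≤ ε * n := by
    have := mul_le_mul_of_nonneg_left hn hε.le
    calc (1 + ρ + ε) * k = ε * ((1 + ρ + ε) / ε * k) := by field_simp
    _ ≤ ε * n := this
  rw [div_le_iff₀ (by linarith)]
  nlinarith [mul_nonneg hρ₀ hk]
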